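/- Let f be holomorphic on the open unit disk D with |f(z)| < 1 on D, let k ≥ 1, and suppose the Taylor coefficients of f at 0 satisfy a₀ = a₁ = ⋯ = a_{k−1} = 0. Suppose further that for some b with |b| = 1, f extends continuously to b, |f(b)| = 1, and f'(b) exists. Then |f'(b)| ≥ k, with equality only if f(z) = e^{iα} z^k on D for some real α. -/

import Mathlib

open Complex Filter

/-!
Write `f = z ^ k * g`; the maximum principle on circles of radius `r → 1` gives `‖g‖ ≤ 1` on the
disk. If `‖g‖` attains `1` inside, `g` is a unimodular constant `c`, so `f = c z ^ k` and
`‖f'(b)‖ = k`. Otherwise `g` maps the disk into itself, and the Schwarz lemma applied to `g`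
composed with the disk automorphism exchanging `g 0` and `0` gives
`‖g z‖ ≤ (s + ‖z‖) / (1 + s ‖z‖)` with `s = ‖g 0‖ < 1`. Along the radius `z = r b` this yields
`(1 - ‖f (r b)‖) / (1 - r) ≥ 1 + r + ⋯ + r ^ (k - 1) + r ^ k (1 - s) / 2`, and letting `r → 1`
gives `‖f'(b)‖ ≥ k + (1 - s) / 2 > k`.
-/

open Metric Set
open scoped Topology ComplexConjugate

theorem exists_eq_pow_smul_of_iteratedDeriv_eq_zero {E : Type*} [NormedAddCommGroup E]
    [NormedSpace ℂ E] [CompleteSpace E] {f : ℂ → E} {U : Set ℂ} {k : ℕ} (hU : IsOpen U)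
    (hU₀ : (0 : ℂ) ∈ U) (hf : DifferentiableOn ℂ f U)
    (hk : ∀ n < k, iteratedDeriv n f 0 = 0) :
    ∃ g : ℂ → E, DifferentiableOn ℂ g U ∧ ∀ z, f z = z ^ k • g z := by
  obtain ⟨g, hg₀, hfg⟩ := (hf.analyticAt (hU.mem_nhds hU₀)).exists_eq_sum_add_pow_mul k
  have hfg' : ∀ z, f z = z ^ k • g z := fun z => by
    rw [hfg z, Finset.sum_eq_zero fun n hn => by rw [hk n (Finset.mem_range.mp hn), smul_zero],
      zero_add]
  refine ⟨g, fun z hz => ?_, hfg'⟩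
  rcases eq_or_ne z 0 with rfl | hz₀
  · exact hg₀.differentiableAt.differentiableWithinAt
  · have hg : (fun w => (w ^ k)⁻¹ • f w) =ᶠ[𝓝 z] g := by
      filter_upwards [eventually_ne_nhds hz₀] with w hw
      rw [hfg' w, inv_smul_smul₀ (pow_ne_zero k hw)]
    exact ((((differentiableAt_id.pow k).inv (pow_ne_zero k hz₀)).smul
      (hf.differentiableAt (hU.mem_nhds hz))).congr_of_eventuallyEq hg.symm).differentiableWithinAt

theorem norm_le_div_pow_of_norm_pow_smul_le {E : Type*} [NormedAddCommGroup E] [NormedSpace ℂ E]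
    {g : ℂ → E} {k : ℕ} {R M : ℝ} {z : ℂ} (hg : DifferentiableOn ℂ g (ball 0 R))
    (hM : ∀ w ∈ ball (0 : ℂ) R, ‖w ^ k • g w‖ ≤ M) (hz : z ∈ ball (0 : ℂ) R) :
    ‖g z‖ ≤ M / R ^ k := by
  have hR : 0 < R := pos_of_mem_ball hz
  suffices ∀ᶠ r in 𝓝[<] R, ‖g z‖ ≤ M / r ^ k from
    ge_of_tendsto (continuousAt_const.div (continuous_pow k).continuousAt
      (pow_ne_zero k hR.ne')).continuousWithinAt this
  rw [mem_ball_zero_iff] at hz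
  filter_upwards [Ioo_mem_nhdsLT hz] with r ⟨hzr, hrR⟩
  have hr : 0 < r := (norm_nonneg z).trans_lt hzr
  refine norm_le_of_forall_mem_frontier_norm_le isBounded_ball
    (hg.diffContOnCl_ball (closedBall_subset_ball hrR)) (fun w hw => ?_)
    (subset_closure (mem_ball_zero_iff.mpr hzr))
  rw [frontier_ball 0 hr.ne', mem_sphere_zero_iff_norm] at hw
  rw [le_div_iff₀ (pow_pos hr k)]
  calc ‖g w‖ * r ^ k = ‖w ^ k • g w‖ := by rw [norm_smul, norm_pow, hw, mul_comm]
    _ ≤ M := hM w (by rwa [mem_ball_zero_iff, hw])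

theorem sq_norm_one_sub_conj_mul_sub_sq_norm_sub (a w : ℂ) :
    ‖1 - conj a * w‖ ^ 2 - ‖a - w‖ ^ 2 = (1 - ‖a‖ ^ 2) * (1 - ‖w‖ ^ 2) := by
  simp only [← normSq_eq_norm_sq, normSq_apply, sub_re, sub_im, mul_re, mul_im, one_re, one_im,
    conj_re, conj_im]
  ring

theorem norm_sub_le_norm_one_sub_conj_mul {a w : ℂ} (ha : ‖a‖ ≤ 1) (hw : ‖w‖ ≤ 1) :
    ‖a - w‖ ≤ ‖1 - conj a * w‖ := by
  have hid := sq_norm_one_sub_conj_mul_sub_sq_norm_sub a w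
  have hpos : 0 ≤ (1 - ‖a‖ ^ 2) * (1 - ‖w‖ ^ 2) :=
    mul_nonneg (by nlinarith [norm_nonneg a]) (by nlinarith [norm_nonneg w])
  rw [← sq_le_sq₀ (norm_nonneg _) (norm_nonneg _)]
  linarith

/-- The quadratic form on the left factors as `((1 + s r) x - (s + r)) ((1 - s r) x - (s - r))`. -/
theorem one_add_mul_mul_le_add_of_sq_sub_mul_le {r s x : ℝ} (hr : 0 ≤ r) (hr₁ : r < 1)
    (hs : 0 ≤ s) (hs₁ : s ≤ 1)
    (h : (x - s) ^ 2 * (1 - r ^ 2) ≤ r ^ 2 * (1 - s ^ 2) * (1 - x ^ 2)) :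
    (1 + s * r) * x ≤ s + r := by
  by_contra! hlt
  have h₁ : 0 < (1 + s * r) * x - (s + r) := by linarith
  have h₂ : 0 < (1 - s * r) * x - (s - r) := by
    have hsr : 0 < 1 - s * r := by nlinarith
    have key : (1 + s * r) * ((1 - s * r) * x - (s - r))
        = (1 - s * r) * ((1 + s * r) * x - (s + r)) + 2 * r * (1 - s ^ 2) := by ring
    have hprod : 0 < (1 + s * r) * ((1 - s * r) * x - (s - r)) := by
      rw [key]; nlinarith [mul_pos hsr h₁, mul_nonneg hr (show 0 ≤ 1 - s ^ 2 by nlinarith)]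
    exact pos_of_mul_pos_right hprod (by positivity)
  nlinarith [mul_pos h₁ h₂]

theorem one_add_mul_norm_le_of_mapsTo_ball {g : ℂ → ℂ} (hg : DifferentiableOn ℂ g (ball 0 1))
    (hmaps : MapsTo g (ball 0 1) (ball 0 1)) {z : ℂ} (hz : z ∈ ball (0 : ℂ) 1) :
    (1 + ‖g 0‖ * ‖z‖) * ‖g z‖ ≤ ‖g 0‖ + ‖z‖ := by
  set a := g 0
  have hg₁ : ∀ w ∈ ball (0 : ℂ) 1, ‖g w‖ < 1 := fun w hw => mem_ball_zero_iff.mp (hmaps hw)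
  have ha : ‖a‖ < 1 := hg₁ 0 (mem_ball_self one_pos)
  have hden : ∀ w ∈ ball (0 : ℂ) 1, 1 - conj a * g w ≠ 0 := fun w hw => by
    refine sub_ne_zero.mpr (ne_of_apply_ne norm ?_)
    rw [norm_one, norm_mul, norm_conj]
    exact (mul_lt_one_of_nonneg_of_lt_one_left (norm_nonneg _) ha (hg₁ w hw).le).ne'
  set G : ℂ → ℂ := fun w => (a - g w) / (1 - conj a * g w)
  have hG : ‖a - g z‖ ≤ ‖z‖ * ‖1 - conj a * g z‖ := by
    have hGd : DifferentiableOn ℂ G (ball 0 1) :=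
      ((differentiableOn_const a).sub hg).div ((differentiableOn_const 1).sub
        ((differentiableOn_const _).mul hg)) hden
    have hGmaps : MapsTo G (ball 0 1) (closedBall 0 1) := fun w hw => by
      rw [mem_closedBall_zero_iff, norm_div]
      exact div_le_one_of_le₀ (norm_sub_le_norm_one_sub_conj_mul ha.le (hg₁ w hw).le)
        (norm_nonneg _)
    have := Complex.norm_le_norm_of_mapsTo_ball hGd hGmaps (by simp [G, a])
      (mem_ball_zero_iff.mp hz)
    rwa [norm_div, div_le_iff₀ (norm_pos_iff.mpr (hden z hz))] at this
  have hid := sq_norm_one_sub_conj_mul_sub_sq_norm_sub a (g z)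
  have htri : (‖g z‖ - ‖a‖) ^ 2 ≤ ‖a - g z‖ ^ 2 := by
    rw [← sq_abs, abs_sub_comm]
    exact pow_le_pow_left₀ (abs_nonneg _) (abs_norm_sub_norm_le a (g z)) 2
  have hzr := mem_ball_zero_iff.mp hz
  refine one_add_mul_mul_le_add_of_sq_sub_mul_le (norm_nonneg z) hzr (norm_nonneg a) ha.le ?_
  have hsq : ‖a - g z‖ ^ 2 ≤ ‖z‖ ^ 2 * ‖1 - conj a * g z‖ ^ 2 := by
    rw [← mul_pow]; exact pow_le_pow_left₀ (norm_nonneg _) hG 2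
  nlinarith [mul_le_mul_of_nonneg_right htri
    (show 0 ≤ 1 - ‖z‖ ^ 2 by nlinarith [norm_nonneg z])]

theorem geom_sum_add_mul_le_one_sub_pow_mul_div {r s x : ℝ} (k : ℕ) (hr : 0 ≤ r) (hr₁ : r < 1)
    (hs : 0 ≤ s) (hs₁ : s ≤ 1) (hx : (1 + s * r) * x ≤ s + r) :
    ∑ i ∈ Finset.range k, r ^ i + r ^ k * (1 - s) / 2 ≤ (1 - r ^ k * x) / (1 - r) := by
  have h₁ : (1 - s) * (1 - r) ≤ (1 + s * r) * (1 - x) := by linarith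
  have h₂ : 0 ≤ 1 - x := by
    nlinarith [mul_nonneg hs hr, mul_nonneg (sub_nonneg.2 hs₁) (sub_nonneg.2 hr₁.le)]
  have hx' : (1 - s) * (1 - r) / 2 ≤ 1 - x := by
    nlinarith [mul_nonneg (show 0 ≤ 1 - s * r by nlinarith) h₂]
  rw [le_div_iff₀ (sub_pos.mpr hr₁), add_mul, geom_sum_mul_neg]
  nlinarith [mul_le_mul_of_nonneg_left hx' (pow_nonneg hr k)]

theorem le_norm_of_forall_le_one_sub_norm_div {f : ℂ → ℂ} {b fb' : ℂ} {φ : ℝ → ℝ} {L : ℝ}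
    (hb : ‖b‖ = 1) (hfb : ‖f b‖ = 1)
    (hderiv : Tendsto (fun z => (f z - f b) / (z - b)) (𝓝[ball 0 1] b) (𝓝 fb'))
    (hφ : Tendsto φ (𝓝[<] 1) (𝓝 L))
    (hle : ∀ r ∈ Ioo (0 : ℝ) 1, φ r ≤ (1 - ‖f (r * b)‖) / (1 - r)) :
    L ≤ ‖fb'‖ := by
  have hray : Tendsto (fun r : ℝ => (r : ℂ) * b) (𝓝[<] 1) (𝓝[ball 0 1] b) := by
    refine tendsto_nhdsWithin_iff.mpr ⟨?_, ?_⟩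
    · exact ((continuous_ofReal.mul continuous_const).tendsto' 1 b (by simp)).mono_left
        nhdsWithin_le_nhds
    · filter_upwards [Ioo_mem_nhdsLT zero_lt_one] with r hr
      simpa [hb, abs_of_pos hr.1] using hr.2
  refine le_of_tendsto_of_tendsto hφ (hderiv.comp hray).norm ?_
  filter_upwards [Ioo_mem_nhdsLT zero_lt_one] with r hr
  have hdist : ‖(r : ℂ) * b - b‖ = 1 - r := by
    rw [← sub_one_mul, norm_mul, hb, mul_one, ← ofReal_one, ← ofReal_sub, norm_real,
      Real.norm_of_nonpos (by linarith [hr.2]), neg_sub]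
  refine (hle r hr).trans ?_
  rw [Function.comp_apply, norm_div, hdist]
  gcongr
  · linarith [hr.2]
  · have := norm_sub_norm_le (f b) (f (r * b))
    rw [hfb, norm_sub_rev] at this
    linarith

theorem natCast_add_half_le_norm_of_mapsTo_ball {f g : ℂ → ℂ} {k : ℕ} {b fb' : ℂ}
    (hb : ‖b‖ = 1) (hfb : ‖f b‖ = 1)
    (hderiv : Tendsto (fun z => (f z - f b) / (z - b)) (𝓝[ball 0 1] b) (𝓝 fb'))
    (hg : DifferentiableOn ℂ g (ball 0 1)) (hmaps : MapsTo g (ball 0 1) (ball 0 1))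
    (hfg : ∀ z ∈ ball (0 : ℂ) 1, f z = z ^ k * g z) :
    k + (1 - ‖g 0‖) / 2 ≤ ‖fb'‖ := by
  have hs₁ : ‖g 0‖ ≤ 1 := (mem_ball_zero_iff.mp (hmaps (mem_ball_self one_pos))).le
  have hφ : Tendsto (fun r : ℝ => ∑ i ∈ Finset.range k, r ^ i + r ^ k * (1 - ‖g 0‖) / 2)
      (𝓝[<] 1) (𝓝 (k + (1 - ‖g 0‖) / 2)) :=
    (Continuous.tendsto' (by fun_prop) 1 _ (by simp)).mono_left nhdsWithin_le_nhds
  refine le_norm_of_forall_le_one_sub_norm_div hb hfb hderiv hφ fun r hr => ?_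
  have hrb : ‖(r : ℂ) * b‖ = r := by simp [hb, abs_of_pos hr.1]
  have hmem : (r : ℂ) * b ∈ ball (0 : ℂ) 1 := by
    rw [mem_ball_zero_iff, hrb]; exact hr.2
  have hpick := one_add_mul_norm_le_of_mapsTo_ball hg hmaps hmem
  rw [hrb] at hpick
  rw [hfg _ hmem, norm_mul, norm_pow, hrb]
  exact geom_sum_add_mul_le_one_sub_pow_mul_div k hr.1.le hr.2 (norm_nonneg _) hs₁ hpick

theorem HasDerivAt.eq_of_eqOn_of_tendsto_slope {f h : ℂ → ℂ} {s : Set ℂ} {b h' fb' : ℂ}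
    (hh : HasDerivAt h h' b) (hbs : b ∈ closure s) (hb : b ∉ s) (hfh : EqOn f h s)
    (hcont : ContinuousWithinAt f (s ∪ {b}) b)
    (hderiv : Tendsto (fun z => (f z - f b) / (z - b)) (𝓝[s] b) (𝓝 fb')) :
    fb' = h' := by
  have := mem_closure_iff_nhdsWithin_neBot.mp hbs
  have hfh' : f =ᶠ[𝓝[s] b] h := eventually_mem_nhdsWithin.mono hfh
  have hfb : f b = h b :=
    tendsto_nhds_unique (hcont.mono_left (nhdsWithin_mono _ subset_union_left))
      ((hh.continuousAt.tendsto.mono_left nhdsWithin_le_nhds).congr' hfh'.symm)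
  refine tendsto_nhds_unique hderiv
    ((hh.tendsto_slope.mono_left (nhdsWithin_mono _ fun z hz => ?_)).congr' ?_)
  · exact ne_of_mem_of_not_mem hz hb
  · filter_upwards [hfh'] with z hz
    rw [slope_def_field, hz, hfb]

theorem exists_norm_eq_one_eqOn_const_of_not_mapsTo_ball {E : Type*} [NormedAddCommGroup E]
    [NormedSpace ℂ E] [StrictConvexSpace ℝ E] {g : ℂ → E} (hg : DifferentiableOn ℂ g (ball 0 1))
    (hg₁ : ∀ z ∈ ball (0 : ℂ) 1, ‖g z‖ ≤ 1) (hmaps : ¬MapsTo g (ball 0 1) (ball 0 1)) :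
    ∃ c : E, ‖c‖ = 1 ∧ EqOn g (Function.const ℂ c) (ball 0 1) := by
  obtain ⟨z₀, hz₀, hgz₀⟩ := not_forall₂.mp hmaps
  have hc : ‖g z₀‖ = 1 := le_antisymm (hg₁ z₀ hz₀) (by simpa using hgz₀)
  exact ⟨g z₀, hc, eqOn_of_isPreconnected_of_isMaxOn_norm (convex_ball 0 1).isPreconnected
    isOpen_ball hg hz₀ fun w hw => by simpa [hc] using hg₁ w hw⟩

theorem higher_order_boundary_schwarz_rigidity_general
    (f : ℂ → ℂ) (k : ℕ) (b fb' : ℂ)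
    (ha : DifferentiableOn ℂ f {z : ℂ | ‖z‖ < 1})
    (hb : ∀ z : ℂ, ‖z‖ < 1 → ‖f z‖ < 1)
    (hcoeff : ∀ n < k, iteratedDeriv n f 0 / (Nat.factorial n : ℂ) = 0)
    (hbmod : ‖b‖ = 1)
    (hcont : ContinuousWithinAt f ({z : ℂ | ‖z‖ < 1} ∪ {b}) b)
    (hfb : ‖f b‖ = 1)
    (hderiv : Tendsto (fun z => (f z - f b) / (z - b))
      (nhdsWithin b {z : ℂ | ‖z‖ < 1}) (nhds fb')) :
    (k : ℝ) ≤ ‖fb'‖ ∧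
      (‖fb'‖ = (k : ℝ) →
        ∃ α : ℝ, ∀ z : ℂ, ‖z‖ < 1 →
          f z = Complex.exp (α * Complex.I) * z ^ k) := by
  rw [← ball_zero_eq] at ha hcont hderiv
  obtain ⟨g, hg, hfg⟩ := exists_eq_pow_smul_of_iteratedDeriv_eq_zero isOpen_ball
    (mem_ball_self one_pos) ha fun n hn => by simpa [Nat.factorial_ne_zero] using hcoeff n hn
  simp only [smul_eq_mul] at hfg
  have hg₁ : ∀ z ∈ ball (0 : ℂ) 1, ‖g z‖ ≤ 1 := fun z hz => by
    simpa using norm_le_div_pow_of_norm_pow_smul_le hg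
      (fun w hw => by rw [smul_eq_mul, ← hfg]; exact (hb w (mem_ball_zero_iff.mp hw)).le) hz
  by_cases hmaps : MapsTo g (ball 0 1) (ball 0 1)
  · have hlt := natCast_add_half_le_norm_of_mapsTo_ball hbmod hfb hderiv hg hmaps
      fun z _ => hfg z
    have hs : ‖g 0‖ < 1 := mem_ball_zero_iff.mp (hmaps (mem_ball_self one_pos))
    exact ⟨by linarith, fun _ => by linarith⟩
  obtain ⟨c, hc, hconst⟩ := exists_norm_eq_one_eqOn_const_of_not_mapsTo_ball hg hg₁ hmaps
  have hfc : EqOn f (fun z => c * z ^ k) (ball 0 1) := fun z hz => by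
    rw [hfg, hconst hz, Function.const_apply, mul_comm]
  have hfb' := ((hasDerivAt_pow k b).const_mul c).eq_of_eqOn_of_tendsto_slope
    (by rw [closure_ball 0 one_ne_zero, mem_closedBall_zero_iff, hbmod])
    (by rw [mem_ball_zero_iff, hbmod]; exact lt_irrefl 1) hfc hcont hderiv
  have hexp : exp (arg c * I) = c := by
    simpa [hc] using norm_mul_exp_arg_mul_I c
  refine ⟨by simp [hfb', hc, hbmod], fun _ => ⟨arg c, fun z hz => ?_⟩⟩
  rw [hexp]
  exact hfc (mem_ball_zero_iff.mpr hz)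

/-- Let `f` be holomorphic on the unit disk with `|f| < 1` there, `k ≥ 1`, with Taylor
coefficients `aₙ = f⁽ⁿ⁾(0)/n!` vanishing for `n < k`. If `f` extends continuously to a
boundary point `b` with `|f b| = 1` and has derivative `fb'` at `b`, then
`|f'(b)| ≥ k`, with equality only if `f z = e^{iα} zᵏ` on the disk for some real `α`. -/
theorem higher_order_boundary_schwarz_rigidity
    (f : ℂ → ℂ) (k : ℕ) (hk : 1 ≤ k) (b fb' : ℂ)
    (ha : DifferentiableOn ℂ f {z : ℂ | ‖z‖ < 1})
    (hb : ∀ z : ℂ, ‖z‖ < 1 → ‖f z‖ < 1)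
    (hcoeff : ∀ n < k, iteratedDeriv n f 0 / (Nat.factorial n : ℂ) = 0)
    (hbmod : ‖b‖ = 1)
    (hcont : ContinuousWithinAt f ({z : ℂ | ‖z‖ < 1} ∪ {b}) b)
    (hfb : ‖f b‖ = 1)
    (hderiv : Tendsto (fun z => (f z - f b) / (z - b))
      (nhdsWithin b {z : ℂ | ‖z‖ < 1}) (nhds fb')) :
    (k : ℝ) ≤ ‖fb'‖ ∧
      (‖fb'‖ = (k : ℝ) →
        ∃ α : ℝ, ∀ z : ℂ, ‖z‖ < 1 →
          f z = Complex.exp (α * Complex.I) * z ^ k) :=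
  higher_order_boundary_schwarz_rigidity_general f k b fb' ha hb hcoeff hbmod hcont hfb hderiv
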